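/- arXiv:2306.15048 — 6 statements merged into one kernel-verified Lean document; each statement's English description precedes it below -/
import Mathlib

section
/- Let U be uniformly distributed on (0,1), let F1 be a cumulative distribution function with left-continuous quantile (generalized inverse) Q0 for another cdf F0, and let Y1 be any random variable with cdf F1 defined on the same probability space as U. Then for all 0 ≤ a < b ≤ 1 and any x in (a,b), P(a < U < b and Q0(U) < Y1) ≥ max(x - a - F1(Q0(x)), 0). -/
/-!
On the event `{a < U < x}`, of probability `x - a`, monotonicity of the quantile gives
`Q0 U ≤ Q0 x`, so every such subject with `Q0 x < Y1` is a winner in `(a, b)`. Removing the event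
`{Y1 ≤ Q0 x}`, of probability `F1 (Q0 x)`, leaves at least `x - a - F1 (Q0 x)` of them.
-/

open MeasureTheory Set Filter Function

noncomputable section

/-- `F` is a cumulative distribution function. -/
def IsCDF (F : ℝ → ℝ) : Prop :=
  Monotone F ∧ (∀ y, ContinuousWithinAt F (Set.Ici y) y) ∧
    Tendsto F atBot (nhds 0) ∧ Tendsto F atTop (nhds 1)

namespace IsCDF

variable {F : ℝ → ℝ}

theorem bddBelow_setOf_le (hF : IsCDF F) {u : ℝ} (hu : 0 < u) : BddBelow {y | u ≤ F y} := by
  obtain ⟨y₀, hy₀⟩ := (hF.2.2.1.eventually (eventually_lt_nhds hu)).exists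
  refine ⟨y₀, fun y hy => ?_⟩
  by_contra! hyy₀
  exact (hy.trans (hF.1 hyy₀.le)).not_gt hy₀

theorem nonempty_setOf_le (hF : IsCDF F) {u : ℝ} (hu : u < 1) : {y | u ≤ F y}.Nonempty := by
  obtain ⟨y, hy⟩ := (hF.2.2.2.eventually (eventually_gt_nhds hu)).exists
  exact ⟨y, hy.le⟩

theorem sInf_setOf_le_mono (hF : IsCDF F) {u v : ℝ} (hu : 0 < u) (huv : u ≤ v) (hv : v < 1) :
    sInf {y | u ≤ F y} ≤ sInf {y | v ≤ F y} :=
  csInf_le_csInf (hF.bddBelow_setOf_le hu) (hF.nonempty_setOf_le hv) fun _ hy => huv.trans hy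

end IsCDF

theorem measureReal_preimage_of_map_eq_restrict {Ω α : Type*} [MeasurableSpace Ω]
    [MeasurableSpace α] {μ : Measure Ω} {ν : Measure α} {U : Ω → α} {I s : Set α}
    (hU : Measurable U) (hUlaw : μ.map U = ν.restrict I) (hs : MeasurableSet s) (hsI : s ⊆ I) :
    μ.real (U ⁻¹' s) = ν.real s := by
  rw [measureReal_def, ← Measure.map_apply hU hs, hUlaw, Measure.restrict_apply hs,
    inter_eq_left.mpr hsI, measureReal_def]

theorem measureReal_sub_measureReal_compl_le_inter {α : Type*} [MeasurableSpace α]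
    {μ : Measure α} [IsFiniteMeasure μ] (s t : Set α) :
    μ.real s - μ.real tᶜ ≤ μ.real (s ∩ t) := by
  have hcover : s ⊆ (s ∩ t) ∪ tᶜ := fun ω hω => (em (ω ∈ t)).imp (fun hωt => ⟨hω, hωt⟩) id
  linarith [measureReal_mono (μ := μ) hcover, measureReal_union_le (μ := μ) (s ∩ t) tᶜ]

theorem winner_pointwise_frechet_lower_bound_general
    {Ω : Type*} [MeasurableSpace Ω] (μ : Measure Ω) [IsProbabilityMeasure μ]
    (U Y1 : Ω → ℝ) (F0 F1 Q0 : ℝ → ℝ)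
    (hF0 : IsCDF F0)
    (hQ0 : ∀ u, Q0 u = sInf {y : ℝ | u ≤ F0 y})
    (hU : Measurable U) (hUlaw : μ.map U = volume.restrict (Set.Ioo (0:ℝ) 1))
    (hY1law : ∀ y, (μ {ω | Y1 ω ≤ y}).toReal = F1 y)
    (a b : ℝ) (ha : 0 ≤ a) (hb : b ≤ 1)
    (x : ℝ) (hx : x ∈ Set.Ioo a b) :
    (μ {ω | (a < U ω ∧ U ω < b) ∧ Q0 (U ω) < Y1 ω}).toReal ≥
      max (x - a - F1 (Q0 x)) 0 := by
  obtain ⟨hax, hxb⟩ := hx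
  set below := U ⁻¹' Ioo a x
  set beats := {ω | Q0 x < Y1 ω}
  have hbelow : μ.real below = x - a := by
    rw [measureReal_preimage_of_map_eq_restrict hU hUlaw measurableSet_Ioo
      (Ioo_subset_Ioo ha (hxb.le.trans hb)), Real.volume_real_Ioo_of_le hax.le]
  have hbeats : μ.real beatsᶜ = F1 (Q0 x) := by
    simp only [beats, compl_ofPred, not_lt, measureReal_def, hY1law]
  have hwinners : below ∩ beats ⊆ {ω | (a < U ω ∧ U ω < b) ∧ Q0 (U ω) < Y1 ω} :=
    fun ω ⟨⟨haU, hUx⟩, hω⟩ => by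
      refine ⟨⟨haU, hUx.trans hxb⟩, lt_of_le_of_lt ?_ hω⟩
      rw [hQ0, hQ0]
      exact hF0.sInf_setOf_le_mono (ha.trans_lt haU) hUx.le (hxb.trans_le hb)
  refine max_le ?_ ENNReal.toReal_nonneg
  calc x - a - F1 (Q0 x) = μ.real below - μ.real beatsᶜ := by rw [hbelow, hbeats]
    _ ≤ μ.real (below ∩ beats) := measureReal_sub_measureReal_compl_le_inter below beats
    _ ≤ _ := measureReal_mono hwinners

theorem winner_pointwise_frechet_lower_bound
    {Ω : Type*} [MeasurableSpace Ω] (μ : Measure Ω) [IsProbabilityMeasure μ]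
    (U Y1 : Ω → ℝ) (F0 F1 Q0 : ℝ → ℝ)
    (hF0 : IsCDF F0) (hF1 : IsCDF F1)
    (hQ0 : ∀ u, Q0 u = sInf {y : ℝ | u ≤ F0 y})
    (hU : Measurable U) (hUlaw : μ.map U = volume.restrict (Set.Ioo (0:ℝ) 1))
    (hY1 : Measurable Y1) (hY1law : ∀ y, (μ {ω | Y1 ω ≤ y}).toReal = F1 y)
    (a b : ℝ) (ha : 0 ≤ a) (hab : a < b) (hb : b ≤ 1)
    (x : ℝ) (hx : x ∈ Set.Ioo a b) :
    (μ {ω | (a < U ω ∧ U ω < b) ∧ Q0 (U ω) < Y1 ω}).toReal ≥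
      max (x - a - F1 (Q0 x)) 0 :=
  winner_pointwise_frechet_lower_bound_general μ U Y1 F0 F1 Q0 hF0 hQ0 hU hUlaw hY1law a b ha hb x
    hx
end
end

section
/- Let U be uniformly distributed on (0,1), F0 and F1 cdfs with Q0 the left-continuous quantile function of F0, and Y1 a random variable with cdf F1 on the same probability space. Then for all 0 ≤ a < b ≤ 1, P(a < U < b and Q0(U) < Y1) ≥ sup over x in (a,b) of max(x - a - F1(Q0(x)), 0). -/
open MeasureTheory Set Filter Function

noncomputable section

/-!
Fix `x ∈ (a, b)`. On the event `a < U < x` we have `Q0 U ≤ Q0 x`, so the event of the statement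
contains `{a < U < x} \ {Y1 ≤ Q0 x}`, whose probability is at least
`P(a < U < x) - P(Y1 ≤ Q0 x) = x - a - F1 (Q0 x)`.
-/

section Quantile

variable {F : ℝ → ℝ}

lemma bddBelow_setOf_le_of_tendsto_atBot (hF : Tendsto F atBot (nhds 0)) {u : ℝ} (hu : 0 < u) :
    BddBelow {y | u ≤ F y} := by
  obtain ⟨y₀, hy₀⟩ := eventually_atBot.mp (hF.eventually (eventually_lt_nhds hu))
  refine ⟨y₀, fun z hz => ?_⟩
  by_contra! hzy
  exact (hz.trans_lt (hy₀ z hzy.le)).false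

lemma nonempty_setOf_le_of_tendsto_atTop (hF : Tendsto F atTop (nhds 1)) {u : ℝ} (hu : u < 1) :
    {y | u ≤ F y}.Nonempty :=
  (hF.eventually (eventually_gt_nhds hu)).exists.imp fun _ hy => hy.le

lemma monotoneOn_sInf_setOf_le (hF₀ : Tendsto F atBot (nhds 0)) (hF₁ : Tendsto F atTop (nhds 1)) :
    MonotoneOn (fun u => sInf {y | u ≤ F y}) (Ioo 0 1) := fun _ hu _ hx hux =>
  csInf_le_csInf (bddBelow_setOf_le_of_tendsto_atBot hF₀ hu.1)
    (nonempty_setOf_le_of_tendsto_atTop hF₁ hx.2) fun _ hy => hux.trans hy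

end Quantile

lemma measureReal_preimage_Ioo_of_map_eq_uniform {Ω : Type*} [MeasurableSpace Ω] {μ : Measure Ω}
    {U : Ω → ℝ} (hU : Measurable U) (hUlaw : μ.map U = volume.restrict (Ioo 0 1))
    {a x : ℝ} (ha : 0 ≤ a) (hax : a ≤ x) (hx : x ≤ 1) :
    μ.real (U ⁻¹' Ioo a x) = x - a := by
  rw [← map_measureReal_apply hU measurableSet_Ioo, hUlaw,
    measureReal_restrict_apply measurableSet_Ioo, inter_eq_left.mpr (Ioo_subset_Ioo ha hx),
    Real.volume_real_Ioo_of_le hax]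

theorem winner_subgroup_lower_bound_general
    {Ω : Type*} [MeasurableSpace Ω] (μ : Measure Ω) [IsProbabilityMeasure μ]
    (U Y1 : Ω → ℝ) (F0 F1 Q0 : ℝ → ℝ)
    (hF0 : IsCDF F0)
    (hQ0 : ∀ u, Q0 u = sInf {y : ℝ | u ≤ F0 y})
    (hU : Measurable U) (hUlaw : μ.map U = volume.restrict (Set.Ioo (0:ℝ) 1))
    (hY1law : ∀ y, (μ {ω | Y1 ω ≤ y}).toReal = F1 y)
    (a b : ℝ) (ha : 0 ≤ a) (hb : b ≤ 1)
 :
    (μ {ω | (a < U ω ∧ U ω < b) ∧ Q0 (U ω) < Y1 ω}).toReal ≥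
      ⨆ x ∈ Set.Ioo a b, max (x - a - F1 (Q0 x)) 0 := by
  set E := {ω | (a < U ω ∧ U ω < b) ∧ Q0 (U ω) < Y1 ω}
  have hQ0mono : MonotoneOn Q0 (Ioo 0 1) := by
    rw [funext hQ0]
    exact monotoneOn_sInf_setOf_le hF0.2.2.1 hF0.2.2.2
  refine Real.iSup_le (fun x => Real.iSup_le (fun ⟨hax, hxb⟩ => max_le ?_ measureReal_nonneg)
    measureReal_nonneg) measureReal_nonneg
  have hx1 : x < 1 := hxb.trans_le hb
  have hsub : U ⁻¹' Ioo a x \ {ω | Y1 ω ≤ Q0 x} ⊆ E := by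
    rintro ω ⟨⟨haU, hUx⟩, hQY⟩
    refine ⟨⟨haU, hUx.trans hxb⟩, lt_of_le_of_lt ?_ (not_le.mp hQY)⟩
    exact hQ0mono ⟨ha.trans_lt haU, hUx.trans hx1⟩ ⟨ha.trans_lt hax, hx1⟩ hUx.le
  calc x - a - F1 (Q0 x)
      = μ.real (U ⁻¹' Ioo a x) - μ.real {ω | Y1 ω ≤ Q0 x} := by
        rw [measureReal_preimage_Ioo_of_map_eq_uniform hU hUlaw ha hax.le (hxb.le.trans hb),
          ← hY1law, measureReal_def]
    _ ≤ μ.real (U ⁻¹' Ioo a x \ {ω | Y1 ω ≤ Q0 x}) := le_measureReal_sdiff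
    _ ≤ μ.real E := measureReal_mono hsub

theorem winner_subgroup_lower_bound
    {Ω : Type*} [MeasurableSpace Ω] (μ : Measure Ω) [IsProbabilityMeasure μ]
    (U Y1 : Ω → ℝ) (F0 F1 Q0 : ℝ → ℝ)
    (hF0 : IsCDF F0) (hF1 : IsCDF F1)
    (hQ0 : ∀ u, Q0 u = sInf {y : ℝ | u ≤ F0 y})
    (hU : Measurable U) (hUlaw : μ.map U = volume.restrict (Set.Ioo (0:ℝ) 1))
    (hY1 : Measurable Y1) (hY1law : ∀ y, (μ {ω | Y1 ω ≤ y}).toReal = F1 y)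
    (a b : ℝ) (ha : 0 ≤ a) (hab : a < b) (hb : b ≤ 1)
 :
    (μ {ω | (a < U ω ∧ U ω < b) ∧ Q0 (U ω) < Y1 ω}).toReal ≥
      ⨆ x ∈ Set.Ioo a b, max (x - a - F1 (Q0 x)) 0 :=
  winner_subgroup_lower_bound_general μ U Y1 F0 F1 Q0 hF0 hQ0 hU hUlaw hY1law a b ha hb
end
end

section
/- Let Q0, Q1 be left-continuous quantile functions of cdfs F0, F1 and let 0 ≤ a < b ≤ 1. Suppose f : ℝ → ℝ is nondecreasing and convex. Then for any random variable pair (Y0, Y1) with Y0 = Q0(U), U ~ Uniform(0,1), and Y1 having cdf F1 (arbitrary joint distribution), E[f(Y1 - Y0) · 1{a < U < b}] ≥ ∫_a^b f(Q1(u - a) - Q0(u)) du. -/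
/-!
Write `Z = Q0(U)`, `T = Q1(U - a)` and `A = {a < U < b}`. Since `U` is uniform, the left-hand side
is `E[f(T - Z); A]`, and on `A` the variable `T` has cdf exactly `F1` below level `b - a`, whereas
`Y1` has cdf at most `F1` there. By the fundamental theorem of calculus for the right derivative
`f'`, `f(Y1 - Z) - f(T - Z) = ∫_T^{Y1} f'(t - Z) dt`. As `T` and `Z` are both increasing in `U`,
this integrand is `≥ κ t` for `t ≥ T` and `≤ κ t` for `t < T` (outside a null set), where
`κ t = f'(t - Q0(a + F1 t))` depends on `t` alone. So the positive part of the difference dominates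
`∫_{[T, Y1)} κ` and its negative part is dominated by `∫_{[Y1, T)} κ`. By Tonelli these are
`∫ κ t · P(A, T ≤ t < Y1) dt` and `∫ κ t · P(A, Y1 ≤ t < T) dt`, and the comparison
`P(A, Y1 ≤ t) ≤ P(A, T ≤ t)` orders them. Working with `ℝ≥0∞`-valued integrals throughout avoids any
integrability assumption on `κ`, `Y1` or `T`.
-/

open MeasureTheory Set Filter Function

noncomputable section

open scoped ENNReal

def quantile (F : ℝ → ℝ) (u : ℝ) : ℝ := sInf {y : ℝ | u ≤ F y}

theorem MonotoneOn.measurable_indicator {s : Set ℝ} {g : ℝ → ℝ} (hs : MeasurableSet s)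
    (hg : MonotoneOn g s) : Measurable (s.indicator g) := by
  refine measurable_of_restrict_of_restrict_compl hs ?_ ?_
  · have : s.domRestrict (s.indicator g) = fun x : s => g x :=
      funext fun x => indicator_of_mem x.2 g
    rw [this]
    exact Monotone.measurable fun x y hxy => hg x.2 y.2 hxy
  · have : sᶜ.domRestrict (s.indicator g) = fun _ => 0 := funext fun x => indicator_of_notMem x.2 g
    rw [this]
    exact measurable_const

theorem measurable_quantile (F : ℝ → ℝ) : Measurable (quantile F) := by
  set I := {u : ℝ | BddBelow {y | u ≤ F y} ∧ {y | u ≤ F y}.Nonempty}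
  have hsub {u v : ℝ} (huv : u ≤ v) : {y | v ≤ F y} ⊆ {y | u ≤ F y} := fun _ hy => huv.trans hy
  have hI : I.OrdConnected :=
    (IsUpperSet.ordConnected fun _ _ huv (hu : BddBelow _) => hu.mono (hsub huv)).inter
      (IsLowerSet.ordConnected fun _ _ huv (hu : Set.Nonempty _) => hu.mono (hsub huv))
  have hmono : MonotoneOn (quantile F) I := fun _ hu _ hv huv => csInf_le_csInf hu.1 hv.2 (hsub huv)
  -- off `I`, `sInf` takes its junk value `0`
  have hind : I.indicator (quantile F) = quantile F := by
    ext u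
    by_cases hu : u ∈ I
    · exact indicator_of_mem hu _
    rw [indicator_of_notMem hu]
    rcases not_and_or.mp hu with h | h
    · exact (Real.sInf_of_not_bddBelow h).symm
    · rw [quantile, not_nonempty_iff_eq_empty.mp h, Real.sInf_empty]
  rw [← hind]
  exact hmono.measurable_indicator hI.measurableSet

theorem quantile_le_iff {F : ℝ → ℝ} (hF : IsCDF F) {u : ℝ} (hu : u ∈ Ioo 0 1) (t : ℝ) :
    quantile F u ≤ t ↔ u ≤ F t := by
  obtain ⟨hmono, hrc, hbot, htop⟩ := hF
  have hne : {y | u ≤ F y}.Nonempty := (htop.eventually (eventually_ge_nhds hu.2)).exists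
  have hbdd : BddBelow {y | u ≤ F y} := by
    obtain ⟨y₀, hy₀⟩ := eventually_atBot.mp (hbot.eventually (eventually_lt_nhds hu.1))
    exact ⟨y₀, fun y hy => le_of_not_gt fun hlt => (hy₀ y hlt.le).not_ge hy⟩
  refine ⟨fun h => le_trans ?_ (hmono h), fun h => csInf_le hbdd h⟩
  refine ge_of_tendsto ((hrc _).mono_left (nhdsWithin_mono _ Ioi_subset_Ici_self)) ?_
  filter_upwards [self_mem_nhdsWithin] with y hy
  obtain ⟨s, hs, hsy⟩ := (csInf_lt_iff hbdd hne).mp hy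
  exact hs.trans (hmono hsy.le)

theorem monotoneOn_quantile {F : ℝ → ℝ} (hF : IsCDF F) : MonotoneOn (quantile F) (Ioo 0 1) :=
  fun _ hu _ hv huv =>
    (quantile_le_iff hF hu _).mpr (huv.trans ((quantile_le_iff hF hv _).mp le_rfl))

theorem ae_cdf_pos_of_lt {Ω : Type*} [MeasurableSpace Ω] {μ : Measure Ω} [IsFiniteMeasure μ]
    {Y : Ω → ℝ} {F : ℝ → ℝ} (hF : Monotone F) (hlaw : ∀ y, (μ {ω | Y ω ≤ y}).toReal = F y) :
    ∀ᵐ ω ∂μ, ∀ t, Y ω < t → 0 < F t := by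
  have hrat : ∀ᵐ ω ∂μ, ∀ q : ℚ, Y ω < q → 0 < F q := by
    refine ae_all_iff.mpr fun q => ?_
    by_cases hq : 0 < F q
    · exact Eventually.of_forall fun _ _ => hq
    have hnull : (μ {ω | Y ω ≤ q}).toReal = 0 :=
      le_antisymm ((hlaw q).trans_le (not_lt.mp hq)) ENNReal.toReal_nonneg
    exact measure_mono_null (fun ω hω => (Classical.not_imp.mp hω).1.le)
      ((measureReal_eq_zero_iff).mp hnull)
  filter_upwards [hrat] with ω hω t ht
  obtain ⟨q, hYq, hqt⟩ := exists_rat_btwn ht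
  exact (hω q hYq).trans_le (hF hqt.le)

section StochasticOrder

variable {Ω : Type*} [MeasurableSpace Ω] {ν : Measure Ω}

theorem measure_diff_le_measure_diff_of_le [IsFiniteMeasure ν] {P R : Set Ω}
    (hP : MeasurableSet P) (hR : MeasurableSet R) (h : ν P ≤ ν R) : ν (P \ R) ≤ ν (R \ P) := by
  rw [← measure_inter_add_sdiff P hR, ← measure_inter_add_sdiff R hP, inter_comm R] at h
  exact (ENNReal.add_le_add_iff_left (measure_ne_top ν _)).mp h

theorem lintegral_lintegral_Ico_eq [SFinite ν] {V W : Ω → ℝ} (hV : Measurable V)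
    (hW : Measurable W) {κ : ℝ → ℝ≥0∞} (hκ : Measurable κ) :
    ∫⁻ ω, (∫⁻ t in Ico (V ω) (W ω), κ t) ∂ν = ∫⁻ t, κ t * ν {ω | V ω ≤ t ∧ t < W ω} := by
  set S := {p : Ω × ℝ | V p.1 ≤ p.2 ∧ p.2 < W p.1}
  have hS : MeasurableSet S :=
    (measurableSet_le (hV.comp measurable_fst) measurable_snd).inter
      (measurableSet_lt measurable_snd (hW.comp measurable_fst))
  calc ∫⁻ ω, (∫⁻ t in Ico (V ω) (W ω), κ t) ∂ν
      = ∫⁻ ω, (∫⁻ t, S.indicator (fun p => κ p.2) (ω, t)) ∂ν := by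
        refine lintegral_congr fun ω => ?_
        rw [← lintegral_indicator measurableSet_Ico]
        rfl
    _ = ∫⁻ t, ∫⁻ ω, S.indicator (fun p => κ p.2) (ω, t) ∂ν :=
        lintegral_lintegral_swap ((hκ.comp measurable_snd).indicator hS).aemeasurable
    _ = ∫⁻ t, κ t * ν {ω | V ω ≤ t ∧ t < W ω} := by
        refine lintegral_congr fun t => ?_
        exact lintegral_indicator_const (μ := ν) (s := {ω | V ω ≤ t ∧ t < W ω})
          ((measurableSet_le hV measurable_const).inter (measurableSet_lt measurable_const hW))
          (κ t)

theorem integral_nonneg_of_lintegral_ofReal_neg_le {D : Ω → ℝ} (hD : Integrable D ν)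
    (h : ∫⁻ ω, ENNReal.ofReal (-D ω) ∂ν ≤ ∫⁻ ω, ENNReal.ofReal (D ω) ∂ν) : 0 ≤ ∫ ω, D ω ∂ν := by
  rw [integral_eq_lintegral_pos_part_sub_lintegral_neg_part hD, sub_nonneg]
  exact ENNReal.toReal_mono hD.lintegral_lt_top.ne h

theorem integral_nonneg_of_lintegral_Ico_bounds [IsFiniteMeasure ν] {V W : Ω → ℝ}
    (hV : Measurable V) (hW : Measurable W) {κ : ℝ → ℝ≥0∞} (hκ : Measurable κ)
    (hdom : ∀ t, κ t ≠ 0 → ν {ω | V ω ≤ t} ≤ ν {ω | W ω ≤ t}) {D : Ω → ℝ} (hD : Integrable D ν)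
    (hpos : ∀ᵐ ω ∂ν, ∫⁻ t in Ico (W ω) (V ω), κ t ≤ ENNReal.ofReal (D ω))
    (hneg : ∀ᵐ ω ∂ν, ENNReal.ofReal (-D ω) ≤ ∫⁻ t in Ico (V ω) (W ω), κ t) :
    0 ≤ ∫ ω, D ω ∂ν := by
  have hcross (t : ℝ) :
      κ t * ν {ω | V ω ≤ t ∧ t < W ω} ≤ κ t * ν {ω | W ω ≤ t ∧ t < V ω} := by
    rcases eq_or_ne (κ t) 0 with h | h
    · simp [h]
    have hVt := measurableSet_le hV (measurable_const (a := t))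
    have hWt := measurableSet_le hW (measurable_const (a := t))
    have hdiff (P Q : Ω → ℝ) : {ω | P ω ≤ t ∧ t < Q ω} = {ω | P ω ≤ t} \ {ω | Q ω ≤ t} := by
      ext; simp
    rw [hdiff V W, hdiff W V]
    exact mul_le_mul_right (measure_diff_le_measure_diff_of_le hVt hWt (hdom t h)) (κ t)
  refine integral_nonneg_of_lintegral_ofReal_neg_le hD ?_
  calc ∫⁻ ω, ENNReal.ofReal (-D ω) ∂ν
      ≤ ∫⁻ ω, (∫⁻ t in Ico (V ω) (W ω), κ t) ∂ν := lintegral_mono_ae hneg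
    _ = ∫⁻ t, κ t * ν {ω | V ω ≤ t ∧ t < W ω} := lintegral_lintegral_Ico_eq hV hW hκ
    _ ≤ ∫⁻ t, κ t * ν {ω | W ω ≤ t ∧ t < V ω} := lintegral_mono hcross
    _ = ∫⁻ ω, (∫⁻ t in Ico (W ω) (V ω), κ t) ∂ν := (lintegral_lintegral_Ico_eq hW hV hκ).symm
    _ ≤ ∫⁻ ω, ENNReal.ofReal (D ω) ∂ν := lintegral_mono_ae hpos

end StochasticOrder

theorem ofReal_sub_comp_sub_eq_lintegral {f f' : ℝ → ℝ} (hf_cont : Continuous f)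
    (hf' : ∀ x, HasDerivWithinAt f (f' x) (Ioi x) x) (hf'_mono : Monotone f')
    (hf'_nonneg : ∀ x, 0 ≤ f' x) (z : ℝ) {x y : ℝ} (hxy : x ≤ y) :
    ENNReal.ofReal (f (y - z) - f (x - z)) = ∫⁻ t in Ico x y, ENNReal.ofReal (f' (t - z)) := by
  have hg'_mono : Monotone fun t => f' (t - z) := fun _ _ hst => hf'_mono (sub_le_sub_right hst z)
  have hg' (t : ℝ) : HasDerivWithinAt (fun s => f (s - z)) (f' (t - z)) (Ioi t) t := by
    have h := (hf' (t - z)).comp t ((hasDerivAt_id t).sub_const z).hasDerivWithinAt (s := Ioi t)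
      fun s (hs : t < s) => sub_lt_sub_right hs z
    simpa only [mul_one, comp_def, id] using h
  have hftc : ∫ t in x..y, f' (t - z) = f (y - z) - f (x - z) :=
    intervalIntegral.integral_eq_sub_of_hasDeriv_right_of_le hxy (by fun_prop)
      (fun t _ => hg' t) hg'_mono.intervalIntegrable
  rw [← hftc, intervalIntegral.integral_of_le hxy, ofReal_integral_eq_lintegral_ofReal
    hg'_mono.intervalIntegrable.1 (ae_of_all _ fun t => hf'_nonneg _)]
  exact setLIntegral_congr Ico_ae_eq_Ioc.symm

/-- The slope `f'` at `t - quantile F0 (a + F1 t)`, where `a + F1 t` is the rank `u` at which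
the coupling `u ↦ quantile F1 (u - a)` reaches level `t`; zero off the levels
`{0 < F1 < b - a}` it reaches on `(a, b)`. -/
def coupledSlope (f' F0 F1 : ℝ → ℝ) (a b : ℝ) : ℝ → ℝ≥0∞ :=
  {t | 0 < F1 t ∧ F1 t < b - a}.indicator fun t => ENNReal.ofReal (f' (t - quantile F0 (a + F1 t)))

section CoupledSlope

variable {f f' F0 F1 : ℝ → ℝ} {a b u : ℝ}

theorem measurable_coupledSlope (hf'_mono : Monotone f') (hF1 : Monotone F1) :
    Measurable (coupledSlope f' F0 F1 a b) :=
  (ENNReal.measurable_ofReal.comp (hf'_mono.measurable.comp (measurable_id.sub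
    ((measurable_quantile F0).comp (measurable_const.add hF1.measurable))))).indicator
    ((measurableSet_lt measurable_const hF1.measurable).inter
      (measurableSet_lt hF1.measurable measurable_const))

theorem coupledSlope_le (hF0 : IsCDF F0) (hF1 : IsCDF F1) (ha : 0 ≤ a) (hb : b ≤ 1)
    (hf'_mono : Monotone f') (hu : u ∈ Ioo a b) {t : ℝ} (ht : quantile F1 (u - a) ≤ t) :
    coupledSlope f' F0 F1 a b t ≤ ENNReal.ofReal (f' (t - quantile F0 u)) := by
  by_cases htE : t ∈ {t | 0 < F1 t ∧ F1 t < b - a}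
  · rw [coupledSlope, indicator_of_mem htE]
    have hrank : u - a ≤ F1 t :=
      (quantile_le_iff hF1 ⟨by linarith [hu.1], by linarith [hu.2]⟩ t).mp ht
    refine ENNReal.ofReal_le_ofReal (hf'_mono (sub_le_sub_left ?_ t))
    exact monotoneOn_quantile hF0 ⟨by linarith [hu.1], by linarith [hu.2]⟩
      ⟨by linarith [htE.1], by linarith [htE.2]⟩ (by linarith)
  · rw [coupledSlope, indicator_of_notMem htE]
    exact zero_le

theorem le_coupledSlope (hF0 : IsCDF F0) (hF1 : IsCDF F1) (ha : 0 ≤ a) (hb : b ≤ 1)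
    (hf'_mono : Monotone f') (hu : u ∈ Ioo a b) {t : ℝ} (ht₀ : 0 < F1 t)
    (ht : t < quantile F1 (u - a)) :
    ENNReal.ofReal (f' (t - quantile F0 u)) ≤ coupledSlope f' F0 F1 a b t := by
  have hrank : F1 t < u - a := lt_of_not_ge fun h =>
    ht.not_ge ((quantile_le_iff hF1 ⟨by linarith [hu.1], by linarith [hu.2]⟩ t).mpr h)
  rw [coupledSlope, indicator_of_mem (show t ∈ {t | 0 < F1 t ∧ F1 t < b - a} from
    ⟨ht₀, by linarith [hu.2]⟩)]
  refine ENNReal.ofReal_le_ofReal (hf'_mono (sub_le_sub_left ?_ t))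
  exact monotoneOn_quantile hF0 ⟨by linarith, by linarith [hu.2]⟩
    ⟨by linarith [hu.1], by linarith [hu.2]⟩ (by linarith)

theorem lintegral_coupledSlope_le (hF0 : IsCDF F0) (hF1 : IsCDF F1) (ha : 0 ≤ a) (hb : b ≤ 1)
    (hf_cont : Continuous f) (hf' : ∀ x, HasDerivWithinAt f (f' x) (Ioi x) x)
    (hf'_mono : Monotone f') (hf'_nonneg : ∀ x, 0 ≤ f' x) (hu : u ∈ Ioo a b) (y : ℝ) :
    ∫⁻ t in Ico (quantile F1 (u - a)) y, coupledSlope f' F0 F1 a b t ≤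
      ENNReal.ofReal (f (y - quantile F0 u) - f (quantile F1 (u - a) - quantile F0 u)) := by
  rcases le_or_gt (quantile F1 (u - a)) y with hTy | hyT
  · rw [ofReal_sub_comp_sub_eq_lintegral hf_cont hf' hf'_mono hf'_nonneg _ hTy]
    exact setLIntegral_mono
      (ENNReal.measurable_ofReal.comp (hf'_mono.measurable.comp (measurable_id.sub_const _)))
      fun t ht => coupledSlope_le hF0 hF1 ha hb hf'_mono hu ht.1
  · rw [Ico_eq_empty (not_lt.mpr hyT.le), Measure.restrict_empty, lintegral_zero_measure]
    exact zero_le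

theorem ofReal_sub_le_lintegral_coupledSlope (hF0 : IsCDF F0) (hF1 : IsCDF F1) (ha : 0 ≤ a)
    (hb : b ≤ 1) (hf_cont : Continuous f) (hf_mono : Monotone f)
    (hf' : ∀ x, HasDerivWithinAt f (f' x) (Ioi x) x) (hf'_mono : Monotone f')
    (hf'_nonneg : ∀ x, 0 ≤ f' x) (hu : u ∈ Ioo a b) {y : ℝ} (hy : ∀ t, y < t → 0 < F1 t) :
    ENNReal.ofReal (f (quantile F1 (u - a) - quantile F0 u) - f (y - quantile F0 u)) ≤
      ∫⁻ t in Ico y (quantile F1 (u - a)), coupledSlope f' F0 F1 a b t := by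
  rcases le_or_gt y (quantile F1 (u - a)) with hyT | hTy
  · rw [ofReal_sub_comp_sub_eq_lintegral hf_cont hf' hf'_mono hf'_nonneg _ hyT,
      ← setLIntegral_congr Ioo_ae_eq_Ico, ← setLIntegral_congr Ioo_ae_eq_Ico]
    exact setLIntegral_mono (measurable_coupledSlope hf'_mono hF1.1) fun t ht =>
      le_coupledSlope hF0 hF1 ha hb hf'_mono hu (hy t ht.1) ht.2
  · rw [ENNReal.ofReal_eq_zero.mpr (sub_nonpos.mpr (hf_mono (sub_le_sub_right hTy.le _)))]
    exact zero_le

end CoupledSlope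

section UniformRank

variable {Ω : Type*} [MeasurableSpace Ω] {μ : Measure Ω} {U : Ω → ℝ} {a b : ℝ}

theorem map_restrict_preimage_Ioo (hU : Measurable U)
    (hUlaw : μ.map U = volume.restrict (Ioo (0 : ℝ) 1)) (ha : 0 ≤ a) (hb : b ≤ 1) :
    (μ.restrict (U ⁻¹' Ioo a b)).map U = volume.restrict (Ioo a b) := by
  rw [← Measure.restrict_map hU measurableSet_Ioo, hUlaw,
    Measure.restrict_restrict measurableSet_Ioo,
    inter_eq_self_of_subset_left (Ioo_subset_Ioo ha hb)]

theorem measure_quantile_sub_le_eq (hU : Measurable U)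
    (hUlaw : μ.map U = volume.restrict (Ioo (0 : ℝ) 1)) {F : ℝ → ℝ} (hF : IsCDF F) {t : ℝ}
    (ha : 0 ≤ a) (hb : b ≤ 1) (ht : F t < b - a) :
    μ (U ⁻¹' Ioo a b ∩ {ω | quantile F (U ω - a) ≤ t}) = ENNReal.ofReal (F t) := by
  have hset : U ⁻¹' Ioo a b ∩ {ω | quantile F (U ω - a) ≤ t} = U ⁻¹' Ioc a (a + F t) := by
    ext ω
    simp only [mem_inter_iff, mem_preimage, mem_Ioo, mem_Ioc, mem_ofPred_eq]
    constructor
    · rintro ⟨⟨h₁, h₂⟩, h₃⟩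
      exact ⟨h₁, by linarith [(quantile_le_iff hF ⟨by linarith, by linarith⟩ t).mp h₃]⟩
    · rintro ⟨h₁, h₂⟩
      exact ⟨⟨h₁, by linarith⟩, (quantile_le_iff hF ⟨by linarith, by linarith⟩ t).mpr (by linarith)⟩
  have hsub : Ioc a (a + F t) ⊆ Ioo 0 1 := fun x hx => ⟨by linarith [hx.1], by linarith [hx.2]⟩
  rw [hset, ← Measure.map_apply hU measurableSet_Ioc, hUlaw,
    Measure.restrict_apply measurableSet_Ioc,
    inter_eq_self_of_subset_left hsub, Real.volume_Ioc, add_sub_cancel_left]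

theorem integrableOn_preimage_Ioo_comp (hU : Measurable U)
    (hUlaw : μ.map U = volume.restrict (Ioo (0 : ℝ) 1)) (ha : 0 ≤ a) (hb : b ≤ 1) {g : ℝ → ℝ}
    (hg : IntervalIntegrable g volume a b) : IntegrableOn (fun ω => g (U ω)) (U ⁻¹' Ioo a b) μ := by
  have hg' : Integrable g (volume.restrict (Ioo a b)) := hg.1.mono_set Ioo_subset_Ioc_self
  rw [← map_restrict_preimage_Ioo hU hUlaw ha hb] at hg'
  exact (integrable_map_measure hg'.aestronglyMeasurable hU.aemeasurable).mp hg'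

theorem intervalIntegral_eq_setIntegral_preimage_Ioo (hU : Measurable U)
    (hUlaw : μ.map U = volume.restrict (Ioo (0 : ℝ) 1)) (ha : 0 ≤ a) (hab : a ≤ b) (hb : b ≤ 1)
    {g : ℝ → ℝ} (hg : IntervalIntegrable g volume a b) :
    ∫ u in a..b, g u = ∫ ω in U ⁻¹' Ioo a b, g (U ω) ∂μ := by
  have hg' : AEStronglyMeasurable g (volume.restrict (Ioo a b)) :=
    hg.1.aestronglyMeasurable.mono_set Ioo_subset_Ioc_self
  rw [← map_restrict_preimage_Ioo hU hUlaw ha hb] at hg'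
  rw [intervalIntegral.integral_of_le hab, integral_Ioc_eq_integral_Ioo,
    ← map_restrict_preimage_Ioo hU hUlaw ha hb, integral_map hU.aemeasurable hg']

end UniformRank

theorem setIntegral_sub_quantile_coupling_nonneg {Ω : Type*} [MeasurableSpace Ω] {μ : Measure Ω}
    [IsFiniteMeasure μ] {U Y : Ω → ℝ} {F0 F1 : ℝ → ℝ} (hF0 : IsCDF F0) (hF1 : IsCDF F1)
    (hU : Measurable U) (hUlaw : μ.map U = volume.restrict (Ioo (0 : ℝ) 1)) (hY : Measurable Y)
    (hYlaw : ∀ y, (μ {ω | Y ω ≤ y}).toReal = F1 y) {a b : ℝ} (ha : 0 ≤ a) (hb : b ≤ 1)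
    {f f' : ℝ → ℝ} (hf_cont : Continuous f) (hf_mono : Monotone f)
    (hf' : ∀ x, HasDerivWithinAt f (f' x) (Ioi x) x) (hf'_mono : Monotone f')
    (hf'_nonneg : ∀ x, 0 ≤ f' x)
    (hint : IntegrableOn (fun ω => f (Y ω - quantile F0 (U ω)) -
      f (quantile F1 (U ω - a) - quantile F0 (U ω))) (U ⁻¹' Ioo a b) μ) :
    0 ≤ ∫ ω in U ⁻¹' Ioo a b,
      (f (Y ω - quantile F0 (U ω)) - f (quantile F1 (U ω - a) - quantile F0 (U ω))) ∂μ := by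
  have hA : MeasurableSet (U ⁻¹' Ioo a b) := hU measurableSet_Ioo
  refine integral_nonneg_of_lintegral_Ico_bounds (W := fun ω => quantile F1 (U ω - a)) hY
    ((measurable_quantile F1).comp (hU.sub_const a))
    (measurable_coupledSlope (F0 := F0) (a := a) (b := b) hf'_mono hF1.1) ?_ hint ?_ ?_
  · intro t ht
    have htE : 0 < F1 t ∧ F1 t < b - a := by
      by_contra h
      exact ht (indicator_of_notMem (s := {t | 0 < F1 t ∧ F1 t < b - a}) h _)
    rw [Measure.restrict_apply' hA, Measure.restrict_apply' hA,
      inter_comm {ω | quantile F1 (U ω - a) ≤ t},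
      measure_quantile_sub_le_eq hU hUlaw hF1 ha hb htE.2,
      ← hYlaw t, ENNReal.ofReal_toReal (measure_ne_top μ _)]
    exact measure_mono inter_subset_left
  · exact ae_restrict_of_forall_mem hA fun ω hω =>
      lintegral_coupledSlope_le hF0 hF1 ha hb hf_cont hf' hf'_mono hf'_nonneg hω (Y ω)
  · filter_upwards [ae_restrict_of_ae (ae_cdf_pos_of_lt hF1.1 hYlaw), ae_restrict_mem hA]
      with ω hYpos hω
    rw [neg_sub]
    exact ofReal_sub_le_lintegral_coupledSlope hF0 hF1 ha hb hf_cont hf_mono hf' hf'_mono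
      hf'_nonneg hω hYpos

theorem lemma1_lower_bound
    {Ω : Type*} [MeasurableSpace Ω] (μ : Measure Ω) [IsProbabilityMeasure μ]
    (U Y1 : Ω → ℝ) (F0 F1 Q0 Q1 : ℝ → ℝ)
    (hF0 : IsCDF F0) (hF1 : IsCDF F1)
    (hQ0 : ∀ u, Q0 u = sInf {y : ℝ | u ≤ F0 y})
    (hQ1 : ∀ u, Q1 u = sInf {y : ℝ | u ≤ F1 y})
    (hU : Measurable U) (hUlaw : μ.map U = volume.restrict (Set.Ioo (0:ℝ) 1))
    (hY1 : Measurable Y1) (hY1law : ∀ y, (μ {ω | Y1 ω ≤ y}).toReal = F1 y)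
    (a b : ℝ) (ha : 0 ≤ a) (hab : a < b) (hb : b ≤ 1)
    (f : ℝ → ℝ) (hf_mono : Monotone f) (hf_conv : ConvexOn ℝ Set.univ f)
    (hint : IntegrableOn (fun ω => f (Y1 ω - Q0 (U ω))) {ω | a < U ω ∧ U ω < b} μ)
    (hint' : IntervalIntegrable (fun u => f (Q1 (u - a) - Q0 u)) volume a b) :
    ∫ u in a..b, f (Q1 (u - a) - Q0 u) ≤
      ∫ ω in {ω | a < U ω ∧ U ω < b}, f (Y1 ω - Q0 (U ω)) ∂μ := by
  obtain rfl : Q0 = quantile F0 := funext hQ0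
  obtain rfl : Q1 = quantile F1 := funext hQ1
  change IntegrableOn _ (U ⁻¹' Ioo a b) μ at hint
  change _ ≤ ∫ ω in U ⁻¹' Ioo a b, _ ∂μ
  have hint_coupled := integrableOn_preimage_Ioo_comp hU hUlaw ha hb hint'
  have hf' (x : ℝ) : HasDerivWithinAt f (derivWithin f (Ioi x) x) (Ioi x) x :=
    hf_conv.hasDerivWithinAt_rightDeriv_of_mem_interior (by simp)
  have hf'_mono : Monotone fun x => derivWithin f (Ioi x) x := fun x y hxy =>
    hf_conv.monotoneOn_rightDeriv (by simp) (by simp) hxy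
  have hcoupling := setIntegral_sub_quantile_coupling_nonneg hF0 hF1 hU hUlaw hY1 hY1law ha hb
    (continuousOn_univ.mp (hf_conv.continuousOn isOpen_univ)) hf_mono hf' hf'_mono
    (fun _ => (hf_mono.monotoneOn _).derivWithin_nonneg) (hint.sub hint_coupled)
  rw [integral_sub hint hint_coupled] at hcoupling
  rw [intervalIntegral_eq_setIntegral_preimage_Ioo hU hUlaw ha hab.le hb hint']
  linarith
end
end

section
/- Let Q0, Q1 be left-continuous quantile functions of cdfs F0, F1 and 0 ≤ a < b ≤ 1. For Y0 = Q0(U), U ~ Uniform(0,1), and Y1 with cdf F1 under any coupling, ∫_a^b max(Q1(u-a) - Q0(u), 0) du ≤ E[max(Y1 - Y0, 0) · 1{a < U < b}] ≤ ∫_a^b max(Q1(1 + a - u) - Q0(u), 0) du. -/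
/-!
Write `(y - x)₊` as the length of `[x, y)` and integrate over the `t`-axis first (Tonelli). Since
`u ≤ F₀ t ↔ Q₀ u ≤ t` for `u ∈ (0, 1)`, the subgroup expectation becomes
`∫ P(a < U < b, U ≤ F₀ t, Y₁ > t) dt`. The same computation turns the two quantile integrals into
`∫ λ{u ∈ (a, b) : u ≤ F₀ t, F₁ t < u - a} dt` and `∫ λ{u ∈ (a, b) : u ≤ F₀ t, F₁ t < 1 + a - u} dt`,
and for every `t` these are the Fréchet–Hoeffding lower and upper bounds for the probability of the
intersection of `{a < U < b, U ≤ F₀ t}` (of probability `(min b (F₀ t) - a)₊`) and `{Y₁ > t}`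
(of probability `1 - F₁ t`).
-/

open MeasureTheory Set Filter Function

noncomputable section

theorem IsCDF.le_iff_quantile_le {F Q : ℝ → ℝ} (hF : IsCDF F)
    (hQ : ∀ u, Q u = sInf {y : ℝ | u ≤ F y}) {u : ℝ} (hu : u ∈ Ioo (0 : ℝ) 1) (t : ℝ) :
    u ≤ F t ↔ Q u ≤ t := by
  obtain ⟨hmono, hcont, hbot, htop⟩ := hF
  set S := {y : ℝ | u ≤ F y}
  have hne : S.Nonempty := by
    obtain ⟨y, hy⟩ := (htop.eventually (eventually_gt_nhds hu.2)).exists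
    exact ⟨y, hy.le⟩
  have hbdd : BddBelow S := by
    obtain ⟨y₀, hy₀⟩ := eventually_atBot.mp (hbot.eventually (eventually_lt_nhds hu.1))
    exact ⟨y₀, fun y hy => le_of_not_gt fun hlt => (hy₀ y hlt.le).not_ge hy⟩
  have hglb : IsGLB S (Q u) := hQ u ▸ isGLB_csInf hne hbdd
  -- the infimum is attained by right-continuity of `F`
  have hmem : Q u ∈ S := by
    have := mem_closure_iff_nhdsWithin_neBot.mp (hglb.mem_closure hne)
    exact ge_of_tendsto ((hcont _).mono_left (nhdsWithin_mono _ fun y hy => hglb.1 hy))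
      (eventually_mem_nhdsWithin.mono fun y hy => hy)
  exact ⟨fun ht => hglb.1 ht, fun ht => hmem.trans (hmono ht)⟩

theorem IsCDF.lt_iff_lt_quantile {F Q : ℝ → ℝ} (hF : IsCDF F)
    (hQ : ∀ u, Q u = sInf {y : ℝ | u ≤ F y}) {u : ℝ} (hu : u ∈ Ioo (0 : ℝ) 1) (t : ℝ) :
    F t < u ↔ t < Q u := by
  simpa only [not_le] using (hF.le_iff_quantile_le hQ hu t).not

theorem lintegral_ofReal_sub_eq_lintegral_measure {α : Type*} [MeasurableSpace α]
    {ν : Measure α} [SFinite ν] {S : Set (α × ℝ)} (hS : MeasurableSet S) {X Y : α → ℝ}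
    (hsec : ∀ᵐ ω ∂ν, ∀ t, (ω, t) ∈ S ↔ X ω ≤ t ∧ t < Y ω) :
    ∫⁻ ω, ENNReal.ofReal (Y ω - X ω) ∂ν = ∫⁻ t, ν {ω | (ω, t) ∈ S} :=
  calc ∫⁻ ω, ENNReal.ofReal (Y ω - X ω) ∂ν = ∫⁻ ω, volume (Prod.mk ω ⁻¹' S) ∂ν := by
        refine lintegral_congr_ae (hsec.mono fun ω hω => ?_)
        dsimp only
        rw [show Prod.mk ω ⁻¹' S = Ico (X ω) (Y ω) from Set.ext (hω ·), Real.volume_Ico]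
    _ = ν.prod volume S := (Measure.prod_apply hS).symm
    _ = ∫⁻ t, ν {ω | (ω, t) ∈ S} := Measure.prod_apply_symm hS

section Quantiles

variable {F0 F1 Q0 Q1 : ℝ → ℝ} {s : Set ℝ}

theorem setLIntegral_sub_quantile_eq {Ω : Type*} [MeasurableSpace Ω] (μ : Measure Ω) [SFinite μ]
    {U Y : Ω → ℝ} (hU : Measurable U) (hY : Measurable Y) (hF0 : IsCDF F0)
    (hQ0 : ∀ u, Q0 u = sInf {y : ℝ | u ≤ F0 y}) (hs : MeasurableSet s) (hs01 : s ⊆ Ioo 0 1) :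
    ∫⁻ ω in U ⁻¹' s, ENNReal.ofReal (Y ω - Q0 (U ω)) ∂μ =
      ∫⁻ t, μ (U ⁻¹' (s ∩ Iic (F0 t)) \ {ω | Y ω ≤ t}) := by
  have hS : MeasurableSet {p : Ω × ℝ | U p.1 ≤ F0 p.2 ∧ p.2 < Y p.1} :=
    (measurableSet_le (hU.comp measurable_fst) (hF0.1.measurable.comp measurable_snd)).inter
      (measurableSet_lt measurable_snd (hY.comp measurable_fst))
  refine (lintegral_ofReal_sub_eq_lintegral_measure hS ?_).trans (lintegral_congr fun t => ?_)
  · filter_upwards [ae_restrict_mem (hU hs)] with ω hω t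
    exact and_congr_left' (hF0.le_iff_quantile_le hQ0 (hs01 hω) t)
  · rw [Measure.restrict_apply (by exact measurable_prodMk_right hS)]
    congr 1
    ext ω
    simp only [mem_ofPred_eq, Set.mem_sdiff, mem_inter_iff, mem_preimage, mem_Iic, not_le]
    tauto

theorem setLIntegral_quantile_sub_eq (hF0 : IsCDF F0) (hF1 : IsCDF F1)
    (hQ0 : ∀ u, Q0 u = sInf {y : ℝ | u ≤ F0 y}) (hQ1 : ∀ u, Q1 u = sInf {y : ℝ | u ≤ F1 y})
    (hs : MeasurableSet s) (hs01 : s ⊆ Ioo 0 1) {g : ℝ → ℝ} (hg : Measurable g)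
    (hgs : MapsTo g s (Ioo 0 1)) :
    ∫⁻ u in s, ENNReal.ofReal (Q1 (g u) - Q0 u) =
      ∫⁻ t, volume (s ∩ Iic (F0 t) ∩ {u | F1 t < g u}) := by
  have hS : MeasurableSet {p : ℝ × ℝ | p.1 ≤ F0 p.2 ∧ F1 p.2 < g p.1} :=
    (measurableSet_le measurable_fst (hF0.1.measurable.comp measurable_snd)).inter
      (measurableSet_lt (hF1.1.measurable.comp measurable_snd) (hg.comp measurable_fst))
  refine (lintegral_ofReal_sub_eq_lintegral_measure hS ?_).trans (lintegral_congr fun t => ?_)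
  · filter_upwards [ae_restrict_mem hs] with u hu t
    exact and_congr (hF0.le_iff_quantile_le hQ0 (hs01 hu) t)
      (hF1.lt_iff_lt_quantile hQ1 (hgs hu) t)
  · rw [Measure.restrict_apply (by exact measurable_prodMk_right hS)]
    congr 1
    ext u
    simp only [mem_ofPred_eq, mem_inter_iff, mem_Iic]
    tauto

end Quantiles

section Frechet

variable {Ω : Type*} [MeasurableSpace Ω] {μ : Measure Ω} {B D : Set Ω} {I : Set ℝ} {a c d : ℝ}

theorem volume_inter_lt_sub_le_measure_diff [IsFiniteMeasure μ] (hI : I ⊆ Ioc a d)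
    (hB : ENNReal.ofReal (d - a) ≤ μ B) (hD : (μ D).toReal = c) :
    volume (I ∩ {u | c < u - a}) ≤ μ (B \ D) :=
  calc volume (I ∩ {u | c < u - a}) ≤ volume (Ioc (a + c) d) :=
        measure_mono fun u hu => ⟨by linarith [hu.2.out], (hI hu.1).2⟩
    _ = ENNReal.ofReal (d - a) - ENNReal.ofReal c := by
        rw [Real.volume_Ioc, ← ENNReal.ofReal_sub _ (hD ▸ ENNReal.toReal_nonneg),
          sub_add_eq_sub_sub]
    _ ≤ μ B - μ D := by
        rw [← hD, ENNReal.ofReal_toReal (measure_ne_top μ D)]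
        exact tsub_le_tsub_right hB _
    _ ≤ μ (B \ D) := le_measure_sdiff

theorem measure_diff_le_volume_inter_lt_sub [IsProbabilityMeasure μ] (hI : Ioo a d ⊆ I)
    (hB : μ B ≤ ENNReal.ofReal (d - a)) (hDm : MeasurableSet D) (hD : (μ D).toReal = c) :
    μ (B \ D) ≤ volume (I ∩ {u | c < 1 + a - u}) :=
  calc μ (B \ D) ≤ min (μ B) (μ Dᶜ) :=
        le_min (measure_mono sdiff_subset) (measure_mono fun _ hω => hω.2)
    _ ≤ min (ENNReal.ofReal (d - a)) (ENNReal.ofReal (1 - c)) := by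
        rw [prob_compl_eq_one_sub hDm, ← hD, ENNReal.ofReal_sub _ ENNReal.toReal_nonneg,
          ENNReal.ofReal_one, ENNReal.ofReal_toReal (measure_ne_top μ D)]
        exact min_le_min_right _ hB
    _ = volume (Ioo a (min d (1 + a - c))) := by
        rw [Real.volume_Ioo, ← ENNReal.ofReal_min, ← min_sub_sub_right]
        congr 2
        ring
    _ ≤ volume (I ∩ {u | c < 1 + a - u}) :=
        measure_mono fun u hu => ⟨hI ⟨hu.1, hu.2.trans_le (min_le_left _ _)⟩,
          by have := hu.2.trans_le (min_le_right _ _); show c < 1 + a - u; linarith⟩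

end Frechet

theorem integral_max_zero_le_of_lintegral_ofReal_le {α β : Type*} [MeasurableSpace α]
    [MeasurableSpace β] {μ : Measure α} {ν : Measure β} {f : α → ℝ} {g : β → ℝ}
    (hf : Integrable (fun x => max (f x) 0) μ) (hg : Integrable (fun y => max (g y) 0) ν)
    (h : ∫⁻ x, ENNReal.ofReal (f x) ∂μ ≤ ∫⁻ y, ENNReal.ofReal (g y) ∂ν) :
    ∫ x, max (f x) 0 ∂μ ≤ ∫ y, max (g y) 0 ∂ν := by
  rw [← ENNReal.ofReal_le_ofReal_iff (integral_nonneg fun y => le_max_right (g y) 0),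
    ofReal_integral_eq_lintegral_ofReal hf (ae_of_all _ fun _ => le_max_right _ _),
    ofReal_integral_eq_lintegral_ofReal hg (ae_of_all _ fun _ => le_max_right _ _)]
  simpa only [ENNReal.ofReal_max, ENNReal.ofReal_zero, zero_le, sup_of_le_left] using h

theorem subgroup_positive_part_bounds
    {Ω : Type*} [MeasurableSpace Ω] (μ : Measure Ω) [IsProbabilityMeasure μ]
    (U Y1 : Ω → ℝ) (F0 F1 Q0 Q1 : ℝ → ℝ)
    (hF0 : IsCDF F0) (hF1 : IsCDF F1)
    (hQ0 : ∀ u, Q0 u = sInf {y : ℝ | u ≤ F0 y})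
    (hQ1 : ∀ u, Q1 u = sInf {y : ℝ | u ≤ F1 y})
    (hU : Measurable U) (hUlaw : μ.map U = volume.restrict (Set.Ioo (0:ℝ) 1))
    (hY1 : Measurable Y1) (hY1law : ∀ y, (μ {ω | Y1 ω ≤ y}).toReal = F1 y)
    (a b : ℝ) (ha : 0 ≤ a) (hab : a < b) (hb : b ≤ 1)
    (hint : IntegrableOn (fun ω => max (Y1 ω - Q0 (U ω)) 0) {ω | a < U ω ∧ U ω < b} μ)
    (hintL : IntervalIntegrable (fun u => max (Q1 (u - a) - Q0 u) 0) volume a b)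
    (hintU : IntervalIntegrable (fun u => max (Q1 (1 + a - u) - Q0 u) 0) volume a b) :
    (∫ u in a..b, max (Q1 (u - a) - Q0 u) 0) ≤
        (∫ ω in {ω | a < U ω ∧ U ω < b}, max (Y1 ω - Q0 (U ω)) 0 ∂μ) ∧
      (∫ ω in {ω | a < U ω ∧ U ω < b}, max (Y1 ω - Q0 (U ω)) 0 ∂μ) ≤
        ∫ u in a..b, max (Q1 (1 + a - u) - Q0 u) 0 := by
  have hab01 : Ioo a b ⊆ Ioo 0 1 := Ioo_subset_Ioo ha hb
  have hlaw : ∀ t, μ (U ⁻¹' (Ioo a b ∩ Iic (F0 t))) = volume (Ioo a b ∩ Iic (F0 t)) := fun t => by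
    have hm := (measurableSet_Ioo (a := a) (b := b)).inter (measurableSet_Iic (a := F0 t))
    rw [← Measure.map_apply hU hm, hUlaw, Measure.restrict_apply hm,
      inter_eq_self_of_subset_left (inter_subset_left.trans hab01)]
  have hinner : ∀ t, Ioo a (min b (F0 t)) ⊆ Ioo a b ∩ Iic (F0 t) := fun t u hu =>
    ⟨⟨hu.1, hu.2.trans_le (min_le_left _ _)⟩, (hu.2.trans_le (min_le_right _ _)).le⟩
  have houter : ∀ t, Ioo a b ∩ Iic (F0 t) ⊆ Ioc a (min b (F0 t)) := fun t u hu =>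
    ⟨hu.1.1, le_min hu.1.2.le hu.2⟩
  have hcoupling := setLIntegral_sub_quantile_eq μ hU hY1 hF0 hQ0 measurableSet_Ioo hab01
  have hlower := setLIntegral_quantile_sub_eq hF0 hF1 hQ0 hQ1 measurableSet_Ioo hab01
    (g := fun u => u - a) (by fun_prop) fun u hu => ⟨by linarith [hu.1], by linarith [hu.2]⟩
  have hupper := setLIntegral_quantile_sub_eq hF0 hF1 hQ0 hQ1 measurableSet_Ioo hab01
    (g := fun u => 1 + a - u) (by fun_prop) fun u hu => ⟨by linarith [hu.2], by linarith [hu.1]⟩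
  simp only [intervalIntegral.integral_of_le hab.le, integral_Ioc_eq_integral_Ioo]
  rw [intervalIntegrable_iff_integrableOn_Ioo_of_le hab.le] at hintL hintU
  constructor
  · refine integral_max_zero_le_of_lintegral_ofReal_le hintL hint ?_
    refine (hlower.trans_le (lintegral_mono fun t => ?_)).trans_eq hcoupling.symm
    exact volume_inter_lt_sub_le_measure_diff (houter t)
      ((hlaw t).symm ▸ Real.volume_Ioo ▸ measure_mono (hinner t)) (hY1law t)
  · refine integral_max_zero_le_of_lintegral_ofReal_le hint hintU ?_
    refine (hcoupling.trans_le (lintegral_mono fun t => ?_)).trans_eq hupper.symm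
    exact measure_diff_le_volume_inter_lt_sub (hinner t)
      ((hlaw t).symm ▸ Real.volume_Ioc ▸ measure_mono (houter t))
      (measurableSet_le hY1 measurable_const) (hY1law t)
end
end

section
/- Let h : ℝ → ℝ be nondecreasing and concave, Q0 and Q1 nondecreasing functions on (0,1), 0 ≤ a < b ≤ 1, and suppose φ, ψ satisfy φ(x) + ψ(y) ≤ h(Q1(x) - Q0(y)) for all x in (0, b-a) and y in (a,b), with equality when x = b - y. Then φ is nondecreasing on (0, b-a). -/
open MeasureTheory Set Filter Function

noncomputable section

/-- Compare `x ≤ x'` against the partner `σ x'` of `x'`, for which the duality inequality is tight. -/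
theorem MonotoneOn.of_add_le_of_add_eq {α β M : Type*} [Preorder α] [Add M] [Preorder M]
    [AddRightReflectLE M] {s : Set α} {t : Set β} {φ : α → M} {ψ : β → M} {c : α → β → M}
    {σ : α → β} (hσ : MapsTo σ s t) (hle : ∀ x ∈ s, ∀ y ∈ t, φ x + ψ y ≤ c x y)
    (heq : ∀ x ∈ s, φ x + ψ (σ x) = c x (σ x)) (hc : ∀ y ∈ t, MonotoneOn (c · y) s) :
    MonotoneOn φ s := by
  intro x hx x' hx' hxx'
  refine le_of_add_le_add_right (a := ψ (σ x')) ?_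
  calc φ x + ψ (σ x') ≤ c x (σ x') := hle x hx _ (hσ hx')
    _ ≤ c x' (σ x') := hc _ (hσ hx') hx hx' hxx'
    _ = φ x' + ψ (σ x') := (heq x' hx').symm

theorem kantorovich_potential_monotone_general
    (h Q0 Q1 φ ψ : ℝ → ℝ)
    (hh_mono : Monotone h)
    (hQ1 : MonotoneOn Q1 (Set.Ioo (0:ℝ) 1))
    (a b : ℝ) (ha : 0 ≤ a) (hb : b ≤ 1)
    (hle : ∀ x ∈ Set.Ioo (0:ℝ) (b - a), ∀ y ∈ Set.Ioo a b, φ x + ψ y ≤ h (Q1 x - Q0 y))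
    (heq : ∀ y ∈ Set.Ioo a b, φ (b - y) + ψ y = h (Q1 (b - y) - Q0 y)) :
    MonotoneOn φ (Set.Ioo (0:ℝ) (b - a)) := by
  have hσ : MapsTo (b - ·) (Ioo 0 (b - a)) (Ioo a b) := fun x hx =>
    ⟨by linarith [hx.2], by linarith [hx.1]⟩
  have hQ1' : MonotoneOn Q1 (Ioo 0 (b - a)) :=
    hQ1.mono (Ioo_subset_Ioo_right (by linarith))
  refine MonotoneOn.of_add_le_of_add_eq hσ hle (fun x hx => ?_) fun y _ =>
    hh_mono.comp_monotoneOn fun x hx x' hx' hxx' => sub_le_sub_right (hQ1' hx hx' hxx') _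
  simpa using heq _ (hσ hx)

theorem kantorovich_potential_monotone
    (h Q0 Q1 φ ψ : ℝ → ℝ)
    (hh_mono : Monotone h) (hh_conc : ConcaveOn ℝ Set.univ h)
    (hQ0 : MonotoneOn Q0 (Set.Ioo (0:ℝ) 1)) (hQ1 : MonotoneOn Q1 (Set.Ioo (0:ℝ) 1))
    (a b : ℝ) (ha : 0 ≤ a) (hab : a < b) (hb : b ≤ 1)
    (hle : ∀ x ∈ Set.Ioo (0:ℝ) (b - a), ∀ y ∈ Set.Ioo a b, φ x + ψ y ≤ h (Q1 x - Q0 y))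
    (heq : ∀ y ∈ Set.Ioo a b, φ (b - y) + ψ y = h (Q1 (b - y) - Q0 y)) :
    MonotoneOn φ (Set.Ioo (0:ℝ) (b - a)) :=
  kantorovich_potential_monotone_general h Q0 Q1 φ ψ hh_mono hQ1 a b ha hb hle heq
end
end

section
/- Let U ~ Uniform(0,1), F1 a cdf with left-continuous quantile Q1, F0 a cdf with left-continuous quantile Q0, 0 ≤ a < b ≤ 1, and ε > 0. Set Δ = (b - a) - sup over x in (a,b) of max(b - x - 1 + F1(Q0(x)), 0), and suppose U1 = U - a + 1 - Δ + ε whenever a < U < a + Δ - ε. Then for every u in (a, a + Δ - ε), F1(Q1(u - a + 1 - Δ + ε)) > F1(Q0(u)), and hence Q1(u - a + 1 - Δ + ε) > Q0(u); that is, all individuals with rank u in (a, a + Δ - ε) are winners under the coupling Y1 = Q1(U1), Y0 = Q0(U). -/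
open MeasureTheory Set Filter Function

noncomputable section

/-!
The rank `u` is sent to `v = u - a + 1 - Δ + ε`. By the definition of `Δ` as `b - a` minus the
supremum `S`, the term at `x = u` of that supremum gives `F1 (Q0 u) ≤ u - a + 1 - Δ < v`, while
the quantile property of the left-continuous inverse gives `v ≤ F1 (Q1 v)` since `v < 1`.
Monotonicity of `F1` then turns `F1 (Q0 u) < F1 (Q1 v)` into `Q0 u < Q1 v`.
-/

theorem le_biSup_of_bddAbove_image {α ι : Type*} [ConditionallyCompleteLattice α] {f : ι → α}
    {s : Set ι} (hf : BddAbove (f '' s)) {i : ι} (hi : i ∈ s) : f i ≤ ⨆ j ∈ s, f j :=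
  le_ciSup₂ (f := fun j _ => f j) (hf.mono <| by rintro _ ⟨_, ⟨j, rfl⟩, hj, rfl⟩; exact ⟨j, hj, rfl⟩) i hi

namespace IsCDF

variable {F : ℝ → ℝ}

theorem nonneg (hF : IsCDF F) (x : ℝ) : 0 ≤ F x :=
  hF.1.le_of_tendsto hF.2.2.1 x

theorem le_one (hF : IsCDF F) (x : ℝ) : F x ≤ 1 :=
  hF.1.ge_of_tendsto hF.2.2.2 x

theorem le_apply_sInf (hF : IsCDF F) {v : ℝ} (hv : v < 1) :
    v ≤ F (sInf {y : ℝ | v ≤ F y}) := by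
  rcases le_or_gt v 0 with hv0 | hv0
  · exact hv0.trans (hF.nonneg _)
  set A := {y : ℝ | v ≤ F y}
  have hA : A.Nonempty := (hF.2.2.2.eventually (eventually_ge_nhds hv)).exists
  obtain ⟨m, hm⟩ : ∃ m, ∀ y ≤ m, F y < v :=
    eventually_atBot.mp (hF.2.2.1.eventually (eventually_lt_nhds hv0))
  have hA_bdd : BddBelow A := ⟨m, fun y hy => le_of_not_gt fun hym => (hm y hym.le).not_ge hy⟩
  have h_right : ∀ x ∈ Ioi (sInf A), v ≤ F x := fun x hx => by
    obtain ⟨y, hy, hyx⟩ := (csInf_lt_iff hA_bdd hA).mp hx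
    exact hy.trans (hF.1 hyx.le)
  exact ge_of_tendsto ((hF.2.1 _).mono_left (nhdsWithin_mono _ Ioi_subset_Ici_self))
    (eventually_nhdsWithin_of_forall h_right)

end IsCDF

theorem winner_upper_bound_near_attained_general
    (F1 Q0 Q1 : ℝ → ℝ)
    (hF1 : IsCDF F1)
    (hQ1 : ∀ u, Q1 u = sInf {y : ℝ | u ≤ F1 y})
    (a b : ℝ) (ε : ℝ) (hε : 0 < ε)
    (Δ : ℝ)
    (hΔdef : Δ = (b - a) - ⨆ x ∈ Set.Ioo a b, max (b - x - 1 + F1 (Q0 x)) 0) :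
    ∀ u ∈ Set.Ioo a (a + Δ - ε),
      F1 (Q0 u) < F1 (Q1 (u - a + 1 - Δ + ε)) ∧ Q0 u < Q1 (u - a + 1 - Δ + ε) := by
  rintro u ⟨hau, huΔ⟩
  set g : ℝ → ℝ := fun x => max (b - x - 1 + F1 (Q0 x)) 0
  have hS_nonneg : 0 ≤ ⨆ x ∈ Ioo a b, g x :=
    Real.iSup_nonneg fun _ => Real.iSup_nonneg fun _ => le_max_right _ _
  have hg_bdd : BddAbove (g '' Ioo a b) := ⟨max (b - a) 0, by
    rintro _ ⟨x, hx, rfl⟩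
    exact max_le_max (by linarith [hx.1, hF1.le_one (Q0 x)]) le_rfl⟩
  have hub : u < b := by linarith
  have hgu : b - u - 1 + F1 (Q0 u) ≤ ⨆ x ∈ Ioo a b, g x :=
    (le_max_left _ _).trans (le_biSup_of_bddAbove_image hg_bdd ⟨hau, hub⟩)
  have hv : u - a + 1 - Δ + ε ≤ F1 (Q1 (u - a + 1 - Δ + ε)) :=
    hQ1 _ ▸ hF1.le_apply_sInf (by linarith)
  have hlt : F1 (Q0 u) < F1 (Q1 (u - a + 1 - Δ + ε)) := by linarith
  exact ⟨hlt, hF1.1.reflect_lt hlt⟩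

theorem winner_upper_bound_near_attained
    {Ω : Type*} [MeasurableSpace Ω] (μ : Measure Ω) [IsProbabilityMeasure μ]
    (U U1 : Ω → ℝ) (F0 F1 Q0 Q1 : ℝ → ℝ)
    (hF0 : IsCDF F0) (hF1 : IsCDF F1)
    (hQ0 : ∀ u, Q0 u = sInf {y : ℝ | u ≤ F0 y})
    (hQ1 : ∀ u, Q1 u = sInf {y : ℝ | u ≤ F1 y})
    (hU : Measurable U) (hUlaw : μ.map U = volume.restrict (Set.Ioo (0:ℝ) 1))
    (a b : ℝ) (ha : 0 ≤ a) (hab : a < b) (hb : b ≤ 1) (ε : ℝ) (hε : 0 < ε)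
    (Δ : ℝ)
    (hΔdef : Δ = (b - a) - ⨆ x ∈ Set.Ioo a b, max (b - x - 1 + F1 (Q0 x)) 0)
    (hU1 : ∀ ω, a < U ω → U ω < a + Δ - ε → U1 ω = U ω - a + 1 - Δ + ε) :
    ∀ u ∈ Set.Ioo a (a + Δ - ε),
      F1 (Q0 u) < F1 (Q1 (u - a + 1 - Δ + ε)) ∧ Q0 u < Q1 (u - a + 1 - Δ + ε) :=
  winner_upper_bound_near_attained_general F1 Q0 Q1 hF1 hQ1 a b ε hε Δ hΔdef
end
end
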